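/- arXiv:2507.23624 — 3 statements merged into one kernel-verified Lean document; each statement's English description precedes it below -/
import Mathlib

section
/- For every graph F and real ε ∈ (0,1), there exist σ ∈ (0,1) and an integer n₀ ≥ 1 such that the following holds for every n ≥ n₀: every graph G on n vertices with minimum degree at least (δ*_F + ε)·n admits a fractional F-decomposition in which every copy of F in G receives weight at least σ/C(n−2, v(F)−2). -/
/-!
Select every copy of `F` in `G` independently with probability `p = 2σ / C(n-2, k-2)` and keep
a selected copy only if it shares no edge with another selected copy and none of its vertices
lies in more than `D ≈ εn / 2k` selected copies. The kept copies are edge-disjoint and remove at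
most `Dk ≤ εn/2` from every degree, so what remains of `G` is still above the threshold and has a
fractional decomposition; weight `1` on the kept copies completes it to one of `G`. Averaging
over the random selection gives a fractional decomposition of `G` in which every copy has weight
at least the probability that it is kept. A copy meets `O(C(n-2, k-2))` others in an edge and a
vertex lies in `O(n C(n-2, k-2))` copies, so by a union bound and Markov's inequality that
probability is at least `p/2 = σ / C(n-2, k-2)`.
-/

open Finset
open scoped Classical

noncomputable section

/-- The degree of `v` in `G` (number of neighbours). -/
def degOf {n : ℕ} (G : SimpleGraph (Fin n)) (v : Fin n) : ℕ :=
  (G.neighborSet v).ncard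

/-- `H` is a copy of `F` in `G`: `H` is a subgraph of `G` obtained as the image of `F`
under an injection of its vertex set. -/
def IsCopyOf {k n : ℕ} (F : SimpleGraph (Fin k)) (G H : SimpleGraph (Fin n)) : Prop :=
  H ≤ G ∧ ∃ f : Fin k ↪ Fin n, H = F.map f

/-- `w` is a fractional `F`-packing of `G`: nonnegative weights on the copies of `F` in
`G` such that for every edge of `G` the weights of the copies containing it sum to at
most `1`. -/
def IsFracFPacking {k n : ℕ} (F : SimpleGraph (Fin k)) (G : SimpleGraph (Fin n))
    (w : SimpleGraph (Fin n) → ℝ) : Prop :=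
  (∀ H, 0 ≤ w H) ∧ (∀ H, ¬ IsCopyOf F G H → w H = 0) ∧
  ∀ e ∈ G.edgeSet,
    ∑ H ∈ Finset.univ.filter (fun H => IsCopyOf F G H ∧ e ∈ H.edgeSet), w H ≤ 1

/-- `w` is a fractional `F`-decomposition of `G`: nonnegative weights on the copies of
`F` in `G` such that for every edge of `G` the weights of the copies containing it sum
to exactly `1`. -/
def IsFracFDecomp {k n : ℕ} (F : SimpleGraph (Fin k)) (G : SimpleGraph (Fin n))
    (w : SimpleGraph (Fin n) → ℝ) : Prop :=
  (∀ H, 0 ≤ w H) ∧ (∀ H, ¬ IsCopyOf F G H → w H = 0) ∧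
  ∀ e ∈ G.edgeSet,
    ∑ H ∈ Finset.univ.filter (fun H => IsCopyOf F G H ∧ e ∈ H.edgeSet), w H = 1

/-- The fractional `F`-decomposition threshold `δ*_F`. -/
def fracFThreshold {k : ℕ} (F : SimpleGraph (Fin k)) : ℝ :=
  sInf {δ : ℝ | δ ∈ Set.Icc (0:ℝ) 1 ∧ ∃ n₀ : ℕ, ∀ n : ℕ, n₀ ≤ n →
    ∀ G : SimpleGraph (Fin n),
      (∀ v, δ * n ≤ (degOf G v : ℝ)) → ∃ w, IsFracFDecomp F G w}

end

section Bernoulli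

variable {α : Type*}

/-- The probability of the outcome `S` when each element of `A` is selected independently
with probability `p`. -/
noncomputable def bernoulliWeight (p : ℝ) (A S : Finset α) : ℝ := p ^ #S * (1 - p) ^ #(A \ S)

lemma bernoulliWeight_nonneg {p : ℝ} (hp0 : 0 ≤ p) (hp1 : p ≤ 1) (A S : Finset α) :
    0 ≤ bernoulliWeight p A S := by
  have := sub_nonneg.2 hp1
  unfold bernoulliWeight
  positivity

lemma sum_bernoulliWeight (p : ℝ) (A : Finset α) :
    ∑ S ∈ A.powerset, bernoulliWeight p A S = 1 := by
  simpa [bernoulliWeight] using (prod_add (fun _ => p) (fun _ => 1 - p) A).symm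

lemma sum_bernoulliWeight_superset (p : ℝ) {A B : Finset α} (hB : B ⊆ A) :
    ∑ S ∈ A.powerset with B ⊆ S, bernoulliWeight p A S = p ^ #B := by
  calc ∑ S ∈ A.powerset with B ⊆ S, bernoulliWeight p A S
      = ∑ T ∈ (A \ B).powerset, p ^ #B * bernoulliWeight p (A \ B) T := by
        refine sum_nbij' (· \ B) (· ∪ B) (fun S hS => ?_) (fun T hT => ?_) (fun S hS => ?_)
          (fun T hT => ?_) (fun S hS => ?_) <;>
          simp only [mem_filter, mem_powerset] at *
        · exact sdiff_subset_sdiff hS.1 le_rfl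
        · exact ⟨union_subset (hT.trans sdiff_subset) hB, subset_union_right⟩
        · exact sdiff_union_of_subset hS.2
        · exact union_sdiff_cancel_right (disjoint_of_subset_left hT sdiff_disjoint)
        · rw [bernoulliWeight, bernoulliWeight, ← card_sdiff_add_card_eq_card hS.2, pow_add,
            sdiff_sdiff_sdiff_cancel_right hS.2]
          ring
    _ = p ^ #B := by rw [← mul_sum, sum_bernoulliWeight, mul_one]

lemma sum_bernoulliWeight_mem (p : ℝ) {A : Finset α} {a : α} (ha : a ∈ A) :
    ∑ S ∈ A.powerset with a ∈ S, bernoulliWeight p A S = p := by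
  simpa using sum_bernoulliWeight_superset p (singleton_subset_iff.2 ha)

lemma sum_bernoulliWeight_mem_mem (p : ℝ) {A : Finset α} {a b : α} (ha : a ∈ A) (hb : b ∈ A)
    (hab : a ≠ b) :
    ∑ S ∈ A.powerset with a ∈ S ∧ b ∈ S, bernoulliWeight p A S = p ^ 2 := by
  have h := sum_bernoulliWeight_superset p (insert_subset ha (singleton_subset_iff.2 hb))
  rw [card_pair hab] at h
  simpa [insert_subset_iff] using h

variable {ι : Type*} {p : ℝ}

lemma sum_bernoulliWeight_mem_mul_card_filter_le (hp0 : 0 ≤ p) {A : Finset α} {a : α}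
    (ha : a ∈ A) (Q : α → Prop) :
    ∑ S ∈ A.powerset with a ∈ S, bernoulliWeight p A S * #(S.filter Q)
      ≤ p ^ 2 * #(A.filter Q) + p := by
  have hcount : ∀ S ∈ A.powerset,
      (if a ∈ S then bernoulliWeight p A S * #(S.filter Q) else 0)
        = ∑ b ∈ A.filter Q, if a ∈ S ∧ b ∈ S then bernoulliWeight p A S else 0 := by
    intro S hS
    by_cases haS : a ∈ S
    · have hfilter : (A.filter Q).filter (· ∈ S) = S.filter Q := by
        ext b
        simp only [mem_filter]
        exact ⟨fun h => ⟨h.2, h.1.2⟩, fun h => ⟨⟨mem_powerset.1 hS h.1, h.2⟩, h.1⟩⟩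
      simp only [haS, true_and, if_true]
      rw [← sum_filter, hfilter, sum_const, nsmul_eq_mul, mul_comm]
    · simp [haS]
  have hpair : ∀ b ∈ A.filter Q,
      ∑ S ∈ A.powerset with a ∈ S ∧ b ∈ S, bernoulliWeight p A S
        ≤ p ^ 2 + if b = a then p else 0 := by
    intro b hb
    by_cases hba : b = a
    · subst hba
      simp only [and_self, if_true, sum_bernoulliWeight_mem p ha]
      nlinarith
    · rw [sum_bernoulliWeight_mem_mem p ha (mem_filter.1 hb).1 (Ne.symm hba), if_neg hba,
        add_zero]
  calc ∑ S ∈ A.powerset with a ∈ S, bernoulliWeight p A S * #(S.filter Q)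
      = ∑ b ∈ A.filter Q, ∑ S ∈ A.powerset with a ∈ S ∧ b ∈ S, bernoulliWeight p A S := by
        rw [sum_filter, sum_congr rfl hcount, sum_comm]
        exact sum_congr rfl fun b _ => (sum_filter _ _).symm
    _ ≤ ∑ b ∈ A.filter Q, (p ^ 2 + if b = a then p else 0) := sum_le_sum hpair
    _ ≤ p ^ 2 * #(A.filter Q) + p := by
        rw [sum_add_distrib, sum_const, nsmul_eq_mul, sum_ite_eq']
        split_ifs <;> linarith [mul_comm (#(A.filter Q) : ℝ) (p ^ 2)]

lemma ite_mem_le_add_sum_add_sum {A : Finset α} {a : α} (B : Finset α) (I : Finset ι)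
    (Q : ι → α → Prop) (D : ℕ) (T : Finset α → Finset α)
    (hT : ∀ S ⊆ A, a ∈ S → Disjoint S B → (∀ i ∈ I, #(S.filter (Q i)) ≤ D) → a ∈ T S)
    {S : Finset α} (hS : S ⊆ A) {x : ℝ} (hx : 0 ≤ x) :
    (if a ∈ S then x else 0)
      ≤ (if a ∈ T S then x else 0) + ∑ b ∈ B, (if a ∈ S ∧ b ∈ S then x else 0)
        + ∑ i ∈ I, (if a ∈ S then x * #(S.filter (Q i)) else 0) / (D + 1) := by
  by_cases haS : a ∈ S
  swap
  · simp only [haS, if_false, false_and, sum_const_zero, zero_div, add_zero]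
    split_ifs <;> positivity
  have hB : 0 ≤ ∑ b ∈ B, (if b ∈ S then x else 0) :=
    sum_nonneg fun _ _ => by split_ifs <;> positivity
  have hI : 0 ≤ ∑ i ∈ I, x * #(S.filter (Q i)) / (D + 1) :=
    sum_nonneg fun _ _ => by positivity
  simp only [haS, if_true, true_and]
  by_cases haT : a ∈ T S
  · simp only [haT, if_true]
    linarith
  simp only [haT, if_false, zero_add]
  by_cases hdisj : Disjoint S B
  · obtain ⟨i, hi, hload⟩ : ∃ i ∈ I, D < #(S.filter (Q i)) := by
      by_contra! h
      exact haT (hT S hS haS hdisj h)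
    have hxi : x ≤ x * #(S.filter (Q i)) / (D + 1) := by
      rw [le_div_iff₀ (by positivity)]
      exact mul_le_mul_of_nonneg_left (by exact_mod_cast hload) hx
    have := single_le_sum (f := fun i => x * #(S.filter (Q i)) / (D + 1))
      (fun _ _ => by positivity) hi
    linarith
  · obtain ⟨b, hbS, hbB⟩ := not_disjoint_iff.1 hdisj
    have := single_le_sum (f := fun b => if b ∈ S then x else 0)
      (fun _ _ => by split_ifs <;> positivity) hbB
    simp only [hbS, if_true] at this
    linarith

/-- Select each element of `A` independently with probability `p`, then let `T S` be any
rule keeping `a` whenever it is selected, no element of `B` is selected, and each of the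
counts `#(S.filter (Q i))`, `i ∈ I`, is at most `D`. Then `a` is kept with probability at
least this bound, by a union bound for `B` and Markov's inequality for the counts. -/
lemma le_sum_bernoulliWeight_mem (hp0 : 0 ≤ p) (hp1 : p ≤ 1) {A : Finset α} {a : α}
    (ha : a ∈ A) (B : Finset α) (hB : B ⊆ A.erase a) (I : Finset ι) (Q : ι → α → Prop)
    (D : ℕ) (T : Finset α → Finset α)
    (hT : ∀ S ⊆ A, a ∈ S → Disjoint S B → (∀ i ∈ I, #(S.filter (Q i)) ≤ D) → a ∈ T S) :
    p - #B * p ^ 2 - ∑ i ∈ I, (p ^ 2 * #(A.filter (Q i)) + p) / (D + 1)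
      ≤ ∑ S ∈ A.powerset with a ∈ T S, bernoulliWeight p A S := by
  have hsum := sum_le_sum fun S hS => ite_mem_le_add_sum_add_sum B I Q D T hT
    (mem_powerset.1 hS) (bernoulliWeight_nonneg hp0 hp1 A S)
  rw [sum_add_distrib, sum_add_distrib, ← sum_filter, sum_bernoulliWeight_mem p ha, ← sum_filter,
    sum_comm, sum_comm (s := A.powerset)] at hsum
  simp only [← sum_div, ← sum_filter] at hsum
  rw [sum_div] at hsum
  have hpairs : ∑ b ∈ B, ∑ S ∈ A.powerset with a ∈ S ∧ b ∈ S, bernoulliWeight p A S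
      = #B * p ^ 2 := by
    rw [sum_congr rfl fun b hb => sum_bernoulliWeight_mem_mem p ha (mem_of_mem_erase (hB hb))
      (ne_of_mem_erase (hB hb)).symm, sum_const, nsmul_eq_mul]
  have hloads : ∑ i ∈ I, (∑ S ∈ A.powerset with a ∈ S,
        bernoulliWeight p A S * #(S.filter (Q i))) / (D + 1)
      ≤ ∑ i ∈ I, (p ^ 2 * #(A.filter (Q i)) + p) / (D + 1) :=
    sum_le_sum fun i _ => div_le_div_of_nonneg_right
      (sum_bernoulliWeight_mem_mul_card_filter_le hp0 ha (Q i)) (by positivity)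
  linarith

end Bernoulli

lemma card_embedding_eqOn_le {α β : Type*} [Fintype α] [Fintype β] (t : Finset α) (v : α → β)
    (hv : Set.InjOn v t) :
    #{f : α ↪ β | ∀ a ∈ t, f a = v a}
      ≤ (Fintype.card β - #t).descFactorial (Fintype.card α - #t) := by
  rw [← Fintype.card_subtype]
  calc Fintype.card {f : α ↪ β // ∀ a ∈ t, f a = v a}
      ≤ Fintype.card ({a // a ∉ t} ↪ {b // b ∉ t.image v}) := by
        refine Fintype.card_le_of_injective
          (fun f => ⟨fun a => ⟨f.1 a.1, fun hfa => a.2 ?_⟩, fun a b hab => ?_⟩) fun f g hfg => ?_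
        · obtain ⟨c, hc, hvc⟩ := mem_image.1 hfa
          rw [← f.2 c hc] at hvc
          exact f.1.injective hvc ▸ hc
        · exact Subtype.ext (f.1.injective (congrArg Subtype.val hab))
        · refine Subtype.ext (DFunLike.ext _ _ fun a => ?_)
          by_cases ha : a ∈ t
          · rw [f.2 a ha, g.2 a ha]
          · exact congrArg Subtype.val (DFunLike.congr_fun hfg ⟨a, ha⟩)
    _ = (Fintype.card β - #t).descFactorial (Fintype.card α - #t) := by
        rw [Fintype.card_embedding_eq, Fintype.card_subtype_compl, Fintype.card_subtype_compl,
          Fintype.card_coe, Fintype.card_coe, card_image_of_injOn hv]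

lemma Nat.descFactorial_pred_le (n k : ℕ) (hn : 1 ≤ n) :
    (n - 1).descFactorial (k - 1) ≤ n * (n - 2).descFactorial (k - 2) := by
  rcases k with _ | _ | j
  · simpa using hn
  · simpa using hn
  rcases n with _ | _ | m
  · omega
  · simp
  simp only [Nat.add_sub_cancel, Nat.succ_descFactorial_succ]
  exact Nat.mul_le_mul_right _ (by omega)

section Copies

variable {k n : ℕ}

noncomputable def copyConst (F : SimpleGraph (Fin k)) : ℕ :=
  k ^ 2 * (F.edgeSet.ncard + 1) * (k - 2).factorial

variable (F : SimpleGraph (Fin k)) (G : SimpleGraph (Fin n))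

lemma card_copies_mem_edgeSet_le (e : Sym2 (Fin n)) :
    #{H | IsCopyOf F G H ∧ e ∈ H.edgeSet} ≤ k ^ 2 * (n - 2).descFactorial (k - 2) := by
  induction e with | _ x y =>
  by_cases hxy : x = y
  · subst hxy
    simp
  have hpair : ∀ ab : Fin k × Fin k,
      #{f : Fin k ↪ Fin n | F.Adj ab.1 ab.2 ∧ f ab.1 = x ∧ f ab.2 = y}
        ≤ (n - 2).descFactorial (k - 2) := by
    rintro ⟨a, b⟩
    by_cases hab : F.Adj a b
    · have hinj : Set.InjOn (fun c => if c = a then x else y) ({a, b} : Finset (Fin k)) := by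
        rw [coe_pair, Set.injOn_pair]
        simp [hab.ne.symm, hxy]
      calc #{f : Fin k ↪ Fin n | F.Adj a b ∧ f a = x ∧ f b = y}
          ≤ #{f : Fin k ↪ Fin n | ∀ c ∈ ({a, b} : Finset (Fin k)),
              f c = if c = a then x else y} := by
            refine card_le_card fun f hf => ?_
            simp only [mem_filter, mem_univ, true_and] at hf ⊢
            simp [hf.2.1, hf.2.2, hab.ne.symm]
        _ ≤ (Fintype.card (Fin n) - #{a, b}).descFactorial (Fintype.card (Fin k) - #{a, b}) := by
            convert card_embedding_eqOn_le _ _ hinj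
        _ = (n - 2).descFactorial (k - 2) := by
            rw [card_pair hab.ne, Fintype.card_fin, Fintype.card_fin]
    · simp [hab]
  calc #{H | IsCopyOf F G H ∧ s(x, y) ∈ H.edgeSet}
      ≤ #((univ : Finset (Fin k × Fin k)).biUnion fun ab =>
          {f : Fin k ↪ Fin n | F.Adj ab.1 ab.2 ∧ f ab.1 = x ∧ f ab.2 = y}) := by
        refine card_le_card_of_surjOn (fun f => F.map f) fun H hH => ?_
        obtain ⟨⟨-, f, rfl⟩, hxyH⟩ := (mem_filter.1 hH).2
        obtain ⟨a, b, hab, rfl, rfl⟩ := (SimpleGraph.map_adj f F _ _).1 hxyH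
        exact ⟨f, mem_biUnion.2 ⟨(a, b), mem_univ _, by simpa using hab⟩, rfl⟩
    _ ≤ ∑ _ab : Fin k × Fin k, (n - 2).descFactorial (k - 2) :=
        card_biUnion_le.trans (sum_le_sum fun ab _ => hpair ab)
    _ = k ^ 2 * (n - 2).descFactorial (k - 2) := by simp [sq]

lemma card_copies_mem_support_le (v : Fin n) :
    #{H | IsCopyOf F G H ∧ v ∈ H.support} ≤ k * (n - 1).descFactorial (k - 1) := by
  calc #{H | IsCopyOf F G H ∧ v ∈ H.support}
      ≤ #((univ : Finset (Fin k)).biUnion fun a => {f : Fin k ↪ Fin n | f a = v}) := by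
        refine card_le_card_of_surjOn (fun f => F.map f) fun H hH => ?_
        obtain ⟨⟨-, f, rfl⟩, hv⟩ := (mem_filter.1 hH).2
        rw [SimpleGraph.support_map] at hv
        obtain ⟨a, -, rfl⟩ := hv
        exact ⟨f, mem_biUnion.2 ⟨a, mem_univ _, by simp⟩, rfl⟩
    _ ≤ ∑ _a : Fin k, (n - 1).descFactorial (k - 1) := by
        refine card_biUnion_le.trans (sum_le_sum fun a _ => ?_)
        calc #{f : Fin k ↪ Fin n | f a = v}
            ≤ (Fintype.card (Fin n) - #{a}).descFactorial (Fintype.card (Fin k) - #{a}) := by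
              convert card_embedding_eqOn_le {a} (fun _ => v) (by simp) using 3
              simp
          _ = (n - 1).descFactorial (k - 1) := by
              rw [card_singleton, Fintype.card_fin, Fintype.card_fin]
    _ = k * (n - 1).descFactorial (k - 1) := by simp

lemma card_copies_mem_support_le_copyConst (hn : 1 ≤ n) (v : Fin n) :
    #{H | IsCopyOf F G H ∧ v ∈ H.support} ≤ copyConst F * n * (n - 2).choose (k - 2) := by
  calc #{H | IsCopyOf F G H ∧ v ∈ H.support} ≤ k * (n - 1).descFactorial (k - 1) :=
        card_copies_mem_support_le F G v
    _ ≤ k * (n * ((k - 2).factorial * (n - 2).choose (k - 2))) := by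
        rw [← Nat.descFactorial_eq_factorial_mul_choose]
        exact Nat.mul_le_mul_left _ (Nat.descFactorial_pred_le n k hn)
    _ ≤ copyConst F * n * (n - 2).choose (k - 2) := by
        have : k ≤ k ^ 2 * (F.edgeSet.ncard + 1) :=
          (Nat.le_self_pow two_ne_zero k).trans (Nat.le_mul_of_pos_right _ (Nat.succ_pos _))
        rw [copyConst]
        nlinarith [Nat.zero_le ((k - 2).factorial * (n - 2).choose (k - 2) * n)]

variable {F G} {H : SimpleGraph (Fin n)}

lemma IsCopyOf.mono {G' : SimpleGraph (Fin n)} (h : IsCopyOf F G' H) (hG : G' ≤ G) :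
    IsCopyOf F G H :=
  ⟨h.1.trans hG, h.2⟩

lemma IsCopyOf.ncard_edgeSet_le (h : IsCopyOf F G H) : H.edgeSet.ncard ≤ F.edgeSet.ncard := by
  obtain ⟨-, f, rfl⟩ := h
  rw [SimpleGraph.edgeSet_map]
  exact Set.ncard_image_le F.edgeSet.toFinite

lemma IsCopyOf.ncard_support_le (h : IsCopyOf F G H) : H.support.ncard ≤ k := by
  obtain ⟨-, f, rfl⟩ := h
  rw [SimpleGraph.support_map, Set.ncard_image_of_injective _ f.injective]
  simpa using Set.ncard_le_card F.support

lemma IsCopyOf.ncard_neighborSet_le (h : IsCopyOf F G H) (v : Fin n) :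
    (H.neighborSet v).ncard ≤ k :=
  (Set.ncard_le_ncard (H.neighborSet_subset_support v)).trans h.ncard_support_le

lemma IsCopyOf.card_not_disjoint_le (h : IsCopyOf F G H) :
    #{H' | IsCopyOf F G H' ∧ ¬Disjoint H.edgeSet H'.edgeSet}
      ≤ F.edgeSet.ncard * (k ^ 2 * (n - 2).descFactorial (k - 2)) := by
  calc #{H' | IsCopyOf F G H' ∧ ¬Disjoint H.edgeSet H'.edgeSet}
      ≤ #(H.edgeSet.toFinset.biUnion fun e => {H' | IsCopyOf F G H' ∧ e ∈ H'.edgeSet}) := by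
        refine card_le_card fun H' hH' => ?_
        obtain ⟨hcopy, hmeet⟩ := (mem_filter.1 hH').2
        obtain ⟨e, he, he'⟩ := Set.not_disjoint_iff.1 hmeet
        simpa using ⟨e, he, hcopy, he'⟩
    _ ≤ ∑ _e ∈ H.edgeSet.toFinset, k ^ 2 * (n - 2).descFactorial (k - 2) :=
        card_biUnion_le.trans (sum_le_sum fun e _ => card_copies_mem_edgeSet_le F G e)
    _ ≤ F.edgeSet.ncard * (k ^ 2 * (n - 2).descFactorial (k - 2)) := by
        rw [sum_const, smul_eq_mul, ← Set.ncard_eq_toFinset_card']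
        exact Nat.mul_le_mul_right _ h.ncard_edgeSet_le

lemma IsCopyOf.card_not_disjoint_le_copyConst (h : IsCopyOf F G H) :
    #{H' | IsCopyOf F G H' ∧ ¬Disjoint H.edgeSet H'.edgeSet}
      ≤ copyConst F * (n - 2).choose (k - 2) := by
  calc #{H' | IsCopyOf F G H' ∧ ¬Disjoint H.edgeSet H'.edgeSet}
      ≤ F.edgeSet.ncard * (k ^ 2 * (n - 2).descFactorial (k - 2)) := h.card_not_disjoint_le
    _ ≤ (F.edgeSet.ncard + 1) * (k ^ 2 * (n - 2).descFactorial (k - 2)) :=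
        Nat.mul_le_mul_right _ F.edgeSet.ncard.le_succ
    _ = copyConst F * (n - 2).choose (k - 2) := by
        rw [copyConst, Nat.descFactorial_eq_factorial_mul_choose]
        ring

end Copies

section Threshold

variable {k n : ℕ}

lemma degOf_lt (G : SimpleGraph (Fin n)) (v : Fin n) : degOf G v < n := by
  simpa [degOf] using Set.ncard_lt_card (s := G.neighborSet v)
    fun h => G.irrefl (show v ∈ G.neighborSet v from h ▸ Set.mem_univ v)

lemma exists_isFracFDecomp_of_fracFThreshold_lt (F : SimpleGraph (Fin k)) {δ : ℝ}
    (h : fracFThreshold F < δ) :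
    ∃ n₀ : ℕ, ∀ n, n₀ ≤ n → ∀ G : SimpleGraph (Fin n),
      (∀ v, δ * n ≤ degOf G v) → ∃ w, IsFracFDecomp F G w := by
  obtain ⟨δ', ⟨-, n₀, hδ'⟩, hδ'δ⟩ := exists_lt_of_csInf_lt
    (by exact ⟨1, ⟨zero_le_one, le_rfl⟩, 1, fun n hn G hG =>
      absurd (hG ⟨0, hn⟩) (by simpa using degOf_lt G ⟨0, hn⟩)⟩) h
  exact ⟨n₀, fun n hn G hG => hδ' n hn G fun v =>
    (mul_le_mul_of_nonneg_right hδ'δ.le n.cast_nonneg).trans (hG v)⟩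

end Threshold

section Decomposition

variable {k n : ℕ} {F : SimpleGraph (Fin k)} {G : SimpleGraph (Fin n)}

lemma IsFracFDecomp.sum_mul {ι : Type*} {s : Finset ι} {c : ι → ℝ}
    {w : ι → SimpleGraph (Fin n) → ℝ} (hc : ∀ i ∈ s, 0 ≤ c i) (hc1 : ∑ i ∈ s, c i = 1)
    (hw : ∀ i ∈ s, IsFracFDecomp F G (w i)) :
    IsFracFDecomp F G fun H => ∑ i ∈ s, c i * w i H := by
  refine ⟨fun H => sum_nonneg fun i hi => mul_nonneg (hc i hi) ((hw i hi).1 H),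
    fun H hH => sum_eq_zero fun i hi => by rw [(hw i hi).2.1 H hH, mul_zero], fun e he => ?_⟩
  rw [sum_comm]
  simp_rw [← mul_sum]
  rw [sum_congr rfl fun i hi => by rw [(hw i hi).2.2 e he, mul_one], hc1]

lemma IsFracFDecomp.sum_copies_of_le {R : SimpleGraph (Fin n)} {w : SimpleGraph (Fin n) → ℝ}
    (hw : IsFracFDecomp F R w) (hRG : R ≤ G) (e : Sym2 (Fin n)) :
    ∑ H ∈ univ.filter (fun H => IsCopyOf F G H ∧ e ∈ H.edgeSet), w H
      = if e ∈ R.edgeSet then 1 else 0 := by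
  rw [← sum_subset (s₁ := univ.filter fun H => IsCopyOf F R H ∧ e ∈ H.edgeSet)]
  · split_ifs with he
    · exact hw.2.2 e he
    · refine sum_eq_zero fun H hH => absurd ?_ he
      obtain ⟨hcopy, heH⟩ := (mem_filter.1 hH).2
      exact SimpleGraph.edgeSet_mono hcopy.1 heH
  · exact monotone_filter_right _ fun H _ hH => ⟨hH.1.mono hRG, hH.2⟩
  · intro H hHG hHR
    exact hw.2.1 H fun hcopy => hHR (mem_filter.2 ⟨mem_univ _, hcopy, (mem_filter.1 hHG).2.2⟩)

lemma IsFracFDecomp.add_indicator {P : Finset (SimpleGraph (Fin n))}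
    (hP : ∀ H ∈ P, IsCopyOf F G H)
    (hdisj : (P : Set (SimpleGraph (Fin n))).PairwiseDisjoint SimpleGraph.edgeSet)
    {w : SimpleGraph (Fin n) → ℝ} (hw : IsFracFDecomp F (G.deleteEdges (⋃ H ∈ P, H.edgeSet)) w) :
    IsFracFDecomp F G fun H => (if H ∈ P then 1 else 0) + w H := by
  refine ⟨fun H => add_nonneg (by split_ifs <;> norm_num) (hw.1 H), fun H hH => ?_, fun e he => ?_⟩
  · dsimp only
    rw [if_neg fun h => hH (hP H h), hw.2.1 H fun h => hH (h.mono (G.deleteEdges_le _)), add_zero]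
  rw [sum_add_distrib, hw.sum_copies_of_le (G.deleteEdges_le _), sum_boole, filter_filter]
  by_cases heP : e ∈ ⋃ H ∈ P, H.edgeSet
  · obtain ⟨H₀, hH₀, heH₀⟩ := Set.mem_iUnion₂.1 heP
    have hunique : univ.filter (fun H => (IsCopyOf F G H ∧ e ∈ H.edgeSet) ∧ H ∈ P) = {H₀} := by
      ext H
      simp only [mem_filter, mem_univ, true_and, mem_singleton]
      exact ⟨fun h => hdisj.elim_set h.2 hH₀ e h.1.2 heH₀, fun h => h ▸ ⟨⟨hP H₀ hH₀, heH₀⟩, hH₀⟩⟩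
    simp [hunique, heP, SimpleGraph.edgeSet_deleteEdges]
  · have hnone : univ.filter (fun H => (IsCopyOf F G H ∧ e ∈ H.edgeSet) ∧ H ∈ P) = ∅ :=
      filter_false_of_mem fun H _ h => heP (Set.mem_biUnion h.2 h.1.2)
    simp [hnone, he, heP, SimpleGraph.edgeSet_deleteEdges]

end Decomposition

section Arithmetic

variable {k : ℕ}

noncomputable def seedWeight (F : SimpleGraph (Fin k)) (ε : ℝ) : ℝ :=
  ε / (32 * (k + 1) ^ 2 * (copyConst F + 1))

variable (F : SimpleGraph (Fin k)) {ε : ℝ}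

lemma seedWeight_pos (hε : 0 < ε) : 0 < seedWeight F ε := by
  unfold seedWeight
  positivity

lemma seedWeight_mul_eq (ε : ℝ) :
    seedWeight F ε * (32 * (k + 1) ^ 2 * (copyConst F + 1)) = ε :=
  div_mul_cancel₀ _ (by positivity)

lemma seedWeight_mul_le (hε : 0 < ε) : 32 * seedWeight F ε * (copyConst F + 1) ≤ ε := by
  have hk : (1 : ℝ) ≤ (k + 1) ^ 2 := one_le_pow₀ (by simp)
  have := seedWeight_pos F hε
  nlinarith [seedWeight_mul_eq F ε]

lemma floor_div_mul_le {x : ℝ} (hx : 0 ≤ x) : (⌊x / (2 * (k + 1))⌋₊ : ℝ) * k ≤ x / 2 := by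
  have hfloor := Nat.floor_le (a := x / (2 * (k + 1))) (by positivity)
  rw [le_div_iff₀ (by positivity)] at hfloor
  nlinarith [Nat.cast_nonneg (α := ℝ) ⌊x / (2 * (k + 1))⌋₊, Nat.cast_nonneg (α := ℝ) k]

lemma four_mul_le_floor_add_one (hε : 0 < ε) {n : ℕ} (hn : 16 * (k + 1) ^ 2 ≤ ε * n) :
    4 * k * (2 * seedWeight F ε * copyConst F * n + 1)
      ≤ ⌊ε * n / (2 * (k + 1))⌋₊ + 1 := by
  have hfloor := (Nat.lt_floor_add_one (ε * n / (2 * (k + 1)))).le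
  rw [div_le_iff₀ (by positivity)] at hfloor
  have hσ := seedWeight_mul_eq F ε
  have hσn : 16 * (k + 1) ^ 2 * seedWeight F ε * copyConst F * n ≤ ε * n / 2 :=
    calc _ ≤ 16 * (k + 1) ^ 2 * seedWeight F ε * (copyConst F + 1) * n := by
          have := seedWeight_pos F hε
          gcongr
          linarith
      _ = ε * n / 2 := by linear_combination (n / 2 : ℝ) * hσ
  have : 2 * (k + 1) * (4 * k * (2 * seedWeight F ε * copyConst F * n + 1))
      ≤ 2 * (k + 1) * (⌊ε * n / (2 * (k + 1))⌋₊ + 1) := by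
    have := seedWeight_pos F hε
    nlinarith
  exact le_of_mul_le_mul_left this (by positivity)

end Arithmetic

section Seeding

variable {k n : ℕ} {F : SimpleGraph (Fin k)} {G : SimpleGraph (Fin n)}

lemma degOf_le_degOf_deleteEdges_add {P : Finset (SimpleGraph (Fin n))}
    (hP : ∀ H ∈ P, IsCopyOf F G H) (v : Fin n) :
    degOf G v ≤ degOf (G.deleteEdges (⋃ H ∈ P, H.edgeSet)) v + #{H ∈ P | v ∈ H.support} * k := by
  have hsub : G.neighborSet v ⊆ (G.deleteEdges (⋃ H ∈ P, H.edgeSet)).neighborSet v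
      ∪ ⋃ H ∈ {H ∈ P | v ∈ H.support}, H.neighborSet v := by
    intro u hu
    by_cases hvu : s(v, u) ∈ ⋃ H ∈ P, H.edgeSet
    · obtain ⟨H, hH, hvuH⟩ := Set.mem_iUnion₂.1 hvu
      exact Or.inr (Set.mem_biUnion (mem_filter.2 ⟨hH, H.mem_support.2 ⟨u, hvuH⟩⟩) hvuH)
    · exact Or.inl (SimpleGraph.deleteEdges_adj.2 ⟨hu, hvu⟩)
  calc degOf G v
      ≤ ((G.deleteEdges (⋃ H ∈ P, H.edgeSet)).neighborSet v
          ∪ ⋃ H ∈ {H ∈ P | v ∈ H.support}, H.neighborSet v).ncard :=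
        Set.ncard_le_ncard hsub (Set.toFinite _)
    _ ≤ degOf (G.deleteEdges (⋃ H ∈ P, H.edgeSet)) v
          + ∑ H ∈ {H ∈ P | v ∈ H.support}, (H.neighborSet v).ncard :=
        (Set.ncard_union_le _ _).trans (Nat.add_le_add_left (set_ncard_biUnion_le _ _) _)
    _ ≤ degOf (G.deleteEdges (⋃ H ∈ P, H.edgeSet)) v + #{H ∈ P | v ∈ H.support} * k :=
        Nat.add_le_add_left (sum_le_card_nsmul _ _ _ fun H hH =>
          (hP H (mem_filter.1 hH).1).ncard_neighborSet_le v) _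

noncomputable def prune (D : ℕ) (S : Finset (SimpleGraph (Fin n))) :
    Finset (SimpleGraph (Fin n)) :=
  {H ∈ S | (∀ H' ∈ S, H' ≠ H → Disjoint H.edgeSet H'.edgeSet) ∧
    ∀ v ∈ H.support, #{H' ∈ S | v ∈ H'.support} ≤ D}

variable {D : ℕ} {S : Finset (SimpleGraph (Fin n))}

lemma prune_subset : prune D S ⊆ S := filter_subset _ _

lemma pairwiseDisjoint_prune :
    (prune D S : Set (SimpleGraph (Fin n))).PairwiseDisjoint SimpleGraph.edgeSet :=
  fun _ hH _ hH' hne => (mem_filter.1 hH).2.1 _ (mem_filter.1 hH').1 hne.symm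

lemma card_filter_prune_le (v : Fin n) : #{H ∈ prune D S | v ∈ H.support} ≤ D := by
  by_cases h : ∃ H ∈ prune D S, v ∈ H.support
  · obtain ⟨H, hH, hv⟩ := h
    exact (card_le_card (filter_subset_filter _ prune_subset)).trans ((mem_filter.1 hH).2.2 v hv)
  · rw [filter_false_of_mem fun H hH hv => h ⟨H, hH, hv⟩, card_empty]
    exact D.zero_le

variable (F G) in
/-- Lower bound for the probability that `H` survives when every copy of `F` is selected
independently with probability `p` and the selection is then pruned. -/
noncomputable def seedSurvivalBound (p : ℝ) (D : ℕ) (H : SimpleGraph (Fin n)) : ℝ :=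
  p - #(({H' | IsCopyOf F G H' ∧ ¬Disjoint H.edgeSet H'.edgeSet} : Finset _).erase H) * p ^ 2
    - ∑ v ∈ H.support.toFinset,
        (p ^ 2 * #{H' | IsCopyOf F G H' ∧ v ∈ H'.support} + p) / (D + 1)

variable {H : SimpleGraph (Fin n)}

lemma seedSurvivalBound_le_sum_bernoulliWeight {p : ℝ} (hp0 : 0 ≤ p) (hp1 : p ≤ 1)
    (hH : IsCopyOf F G H) :
    seedSurvivalBound F G p D H ≤ ∑ S ∈ (univ.filter (IsCopyOf F G)).powerset with H ∈ prune D S,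
      bernoulliWeight p (univ.filter (IsCopyOf F G)) S := by
  set A := univ.filter (IsCopyOf F G)
  have hB :
      ({H' | IsCopyOf F G H' ∧ ¬Disjoint H.edgeSet H'.edgeSet} : Finset _).erase H ⊆ A.erase H :=
    erase_subset_erase _ fun H' hH' => mem_filter.2 ⟨mem_univ _, (mem_filter.1 hH').2.1⟩
  have hsurv := le_sum_bernoulliWeight_mem hp0 hp1 (mem_filter.2 ⟨mem_univ _, hH⟩) _ hB
    H.support.toFinset (fun v H' => v ∈ H'.support) D (prune D) fun S hSA hHS hdisj hload => ?_
  · convert hsurv using 1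
    unfold seedSurvivalBound
    simp only [filter_filter]
    congr!
  refine mem_filter.2 ⟨hHS, fun H' hH'S hne => ?_, fun v hv => ?_⟩
  · by_contra hmeet
    exact disjoint_left.1 hdisj hH'S
      (mem_erase.2 ⟨hne, mem_filter.2 ⟨mem_univ _, (mem_filter.1 (hSA hH'S)).2, hmeet⟩⟩)
  · convert hload v (Set.mem_toFinset.2 hv)

lemma exists_isFracFDecomp_seedSurvivalBound_le {p : ℝ} (hp0 : 0 ≤ p) (hp1 : p ≤ 1)
    (hres : ∀ P : Finset (SimpleGraph (Fin n)), (∀ H ∈ P, IsCopyOf F G H) →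
      (P : Set (SimpleGraph (Fin n))).PairwiseDisjoint SimpleGraph.edgeSet →
      (∀ v, #{H ∈ P | v ∈ H.support} ≤ D) →
      ∃ w, IsFracFDecomp F (G.deleteEdges (⋃ H ∈ P, H.edgeSet)) w) :
    ∃ w, IsFracFDecomp F G w ∧ ∀ H, IsCopyOf F G H → seedSurvivalBound F G p D H ≤ w H := by
  set A := univ.filter (IsCopyOf F G)
  have hcopy : ∀ S ∈ A.powerset, ∀ H ∈ prune D S, IsCopyOf F G H :=
    fun S hS H hH => (mem_filter.1 (mem_powerset.1 hS (prune_subset hH))).2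
  choose! w' hw' using fun S hS =>
    hres (prune D S) (hcopy S hS) pairwiseDisjoint_prune card_filter_prune_le
  refine ⟨fun H => ∑ S ∈ A.powerset,
      bernoulliWeight p A S * ((if H ∈ prune D S then 1 else 0) + w' S H),
    IsFracFDecomp.sum_mul (fun S _ => bernoulliWeight_nonneg hp0 hp1 A S)
      (sum_bernoulliWeight p A) fun S hS =>
        (hw' S hS).add_indicator (hcopy S hS) pairwiseDisjoint_prune,
    fun H hH => (seedSurvivalBound_le_sum_bernoulliWeight hp0 hp1 hH).trans ?_⟩
  rw [sum_filter]
  refine sum_le_sum fun S hS => ?_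
  have := (hw' S hS).1 H
  have := bernoulliWeight_nonneg hp0 hp1 A S
  split_ifs <;> nlinarith

lemma div_choose_le_seedSurvivalBound {σ : ℝ} (hσ : 0 < σ) (hH : IsCopyOf F G H)
    (hn : 1 ≤ n) (hkn : k ≤ n) (hσc : 8 * σ * (copyConst F : ℝ) ≤ 1)
    (hD : 4 * k * (2 * σ * (copyConst F : ℝ) * n + 1) ≤ D + 1) :
    σ / ((n - 2).choose (k - 2) : ℝ)
      ≤ seedSurvivalBound F G (2 * σ / ((n - 2).choose (k - 2) : ℝ)) D H := by
  have hC : (1 : ℝ) ≤ (n - 2).choose (k - 2) := by exact_mod_cast Nat.choose_pos (by omega)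
  have hconflicts :
      (#(({H' | IsCopyOf F G H' ∧ ¬Disjoint H.edgeSet H'.edgeSet} : Finset _).erase H) : ℝ)
        ≤ copyConst F * (n - 2).choose (k - 2) := by
    exact_mod_cast card_erase_le.trans hH.card_not_disjoint_le_copyConst
  have hloads : ∀ v, (#{H' | IsCopyOf F G H' ∧ v ∈ H'.support} : ℝ)
      ≤ copyConst F * n * (n - 2).choose (k - 2) := fun v => by
    exact_mod_cast card_copies_mem_support_le_copyConst F G hn v
  have hI : (#H.support.toFinset : ℝ) ≤ k := by
    rw [← Set.ncard_eq_toFinset_card']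
    exact_mod_cast hH.ncard_support_le
  set C : ℝ := ((n - 2).choose (k - 2) : ℝ)
  set c : ℝ := (copyConst F : ℝ)
  set p := 2 * σ / C
  have hp : 0 ≤ p := by positivity
  have hpC : p * C = 2 * σ := div_mul_cancel₀ _ (by positivity)
  have hconflict_term :
      #(({H' | IsCopyOf F G H' ∧ ¬Disjoint H.edgeSet H'.edgeSet} : Finset _).erase H) * p ^ 2
        ≤ p / 4 := by
    calc _ ≤ c * C * p ^ 2 := by gcongr
      _ = p * (2 * σ * c) := by rw [← hpC]; ring
      _ ≤ p / 4 := by nlinarith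
  have hload_term : ∑ v ∈ H.support.toFinset,
      (p ^ 2 * #{H' | IsCopyOf F G H' ∧ v ∈ H'.support} + p) / (D + 1) ≤ p / 4 := by
    calc _ ≤ ∑ v ∈ H.support.toFinset, (p ^ 2 * (c * n * C) + p) / (D + 1) := by
          gcongr with v
          exact hloads v
      _ = #H.support.toFinset * (p * (2 * σ * c * n + 1)) / (D + 1) := by
          rw [sum_const, nsmul_eq_mul, ← hpC]
          ring
      _ ≤ k * (p * (2 * σ * c * n + 1)) / (D + 1) := by gcongr
      _ ≤ p / 4 := by
          rw [div_le_iff₀ (by positivity)]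
          nlinarith
  have hhalf : σ / C = p / 2 := by ring
  unfold seedSurvivalBound
  linarith

lemma exists_isFracFDecomp_deleteEdges {δ η : ℝ}
    (hdecomp : ∀ G' : SimpleGraph (Fin n), (∀ v, δ * n ≤ degOf G' v) →
      ∃ w, IsFracFDecomp F G' w)
    (hG : ∀ v, (δ + η) * n ≤ degOf G v) (hD : (D : ℝ) * k ≤ η * n)
    {P : Finset (SimpleGraph (Fin n))} (hP : ∀ H ∈ P, IsCopyOf F G H)
    (hPD : ∀ v, #{H ∈ P | v ∈ H.support} ≤ D) :
    ∃ w, IsFracFDecomp F (G.deleteEdges (⋃ H ∈ P, H.edgeSet)) w := by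
  refine hdecomp _ fun v => ?_
  have hdeg : (degOf G v : ℝ) ≤ degOf (G.deleteEdges (⋃ H ∈ P, H.edgeSet)) v + D * k := by
    exact_mod_cast (degOf_le_degOf_deleteEdges_add hP v).trans
      (Nat.add_le_add_left (Nat.mul_le_mul_right k (hPD v)) _)
  linarith [hG v, show (δ + η) * n = δ * n + η * n by ring]

lemma exists_isFracFDecomp_seedWeight_div_le {ε : ℝ} (hε : 0 < ε) (hε1 : ε ≤ 1)
    (hn : 16 * (k + 1) ^ 2 ≤ ε * n) (hkn : k ≤ n)
    (hres : ∀ P : Finset (SimpleGraph (Fin n)), (∀ H ∈ P, IsCopyOf F G H) →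
      (P : Set (SimpleGraph (Fin n))).PairwiseDisjoint SimpleGraph.edgeSet →
      (∀ v, #{H ∈ P | v ∈ H.support} ≤ ⌊ε * n / (2 * (k + 1))⌋₊) →
      ∃ w, IsFracFDecomp F (G.deleteEdges (⋃ H ∈ P, H.edgeSet)) w) :
    ∃ w, IsFracFDecomp F G w ∧ ∀ H, IsCopyOf F G H →
      seedWeight F ε / ((n - 2).choose (k - 2) : ℝ) ≤ w H := by
  have hn1 : 1 ≤ n := by
    by_contra! h
    simp only [Nat.lt_one_iff.1 h, Nat.cast_zero, mul_zero] at hn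
    linarith [show (0 : ℝ) < 16 * (k + 1) ^ 2 by positivity]
  have hσ := seedWeight_mul_le F hε
  have hσ0 := seedWeight_pos F hε
  have hc := Nat.cast_nonneg (α := ℝ) (copyConst F)
  have hC : (1 : ℝ) ≤ (n - 2).choose (k - 2) := by exact_mod_cast Nat.choose_pos (by omega)
  obtain ⟨w, hw, hwH⟩ := exists_isFracFDecomp_seedSurvivalBound_le
    (p := 2 * seedWeight F ε / ((n - 2).choose (k - 2) : ℝ)) (by positivity)
    (div_le_one_of_le₀ (by nlinarith) (by positivity)) hres
  exact ⟨w, hw, fun H hH => (div_choose_le_seedSurvivalBound hσ0 hH hn1 hkn (by linarith)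
    (four_mul_le_floor_add_one F hε hn)).trans (hwH H hH)⟩

end Seeding

/-- **Seeded fractional decompositions.** For every graph `F` (on `k` vertices) and
`ε ∈ (0,1)` there are `σ ∈ (0,1)` and `n₀ ≥ 1` such that for every `n ≥ n₀`: every
`n`-vertex graph `G` with `δ(G) ≥ (δ*_F + ε)·n` has a fractional `F`-decomposition in
which every copy of `F` receives weight at least `σ / C(n−2, v(F)−2)`. -/
theorem seeded_frac_decomposition (k : ℕ) (F : SimpleGraph (Fin k))
    (ε : ℝ) (hε : ε ∈ Set.Ioo (0:ℝ) 1) :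
    ∃ σ ∈ Set.Ioo (0:ℝ) 1, ∃ n₀ : ℕ, 1 ≤ n₀ ∧ ∀ n : ℕ, n₀ ≤ n →
      ∀ G : SimpleGraph (Fin n),
        (∀ v, (fracFThreshold F + ε) * n ≤ (degOf G v : ℝ)) →
        ∃ w : SimpleGraph (Fin n) → ℝ, IsFracFDecomp F G w ∧
          ∀ H, IsCopyOf F G H →
            σ / (((n - 2).choose (k - 2) : ℕ) : ℝ) ≤ w H := by
  obtain ⟨hε0, hε1⟩ := hε
  obtain ⟨n₁, hdecomp⟩ := exists_isFracFDecomp_of_fracFThreshold_lt F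
    (lt_add_of_pos_right (fracFThreshold F) (half_pos hε0))
  have hσ := seedWeight_mul_le F hε0
  have hc := Nat.cast_nonneg (α := ℝ) (copyConst F)
  refine ⟨seedWeight F ε, ⟨seedWeight_pos F hε0, by nlinarith [seedWeight_pos F hε0]⟩,
    n₁ + k + ⌈16 * (k + 1) ^ 2 / ε⌉₊ + 1, by omega, fun n hn G hG => ?_⟩
  have hεn : 16 * (k + 1) ^ 2 ≤ ε * n := by
    rw [← div_le_iff₀' hε0]
    exact (Nat.le_ceil _).trans (by exact_mod_cast (by omega : ⌈16 * (k + 1) ^ 2 / ε⌉₊ ≤ n))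
  have hG' : ∀ v, (fracFThreshold F + ε / 2 + ε / 2) * n ≤ degOf G v := fun v => by
    rw [add_assoc, add_halves]
    exact hG v
  exact exists_isFracFDecomp_seedWeight_div_le hε0 hε1.le hεn (by omega) fun P hP _ hPD =>
    exists_isFracFDecomp_deleteEdges (hdecomp n (by omega)) hG'
      ((floor_div_mul_le (by positivity)).trans_eq (by ring)) hP hPD
end

section
/- Let G = (A, B) be a k-uniform bipartite hypergraph, i.e. a k-uniform hypergraph on vertex set A ∪ B in which every edge contains exactly one vertex of A. If for some integer D every vertex of A has degree at least 2ekD and every vertex of B has degree at most D, then G contains an A-perfect matching, i.e. a set of pairwise vertex-disjoint edges covering every vertex of A. -/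
/-!
Count the systems of disjoint representatives: for `U ⊆ A` let `N(U)` be the number of ways to
pick, for every `a ∈ U`, an edge containing `a` so that the chosen edges are pairwise disjoint.
Induction on `U` gives `deg a * N(U) ≤ 2 * N(U ∪ {a})`. Indeed, fix an edge `e ∋ a`. A system
for `U` conflicts with `e` only if it uses one of the at most `kD` edges meeting `e` in `B`, and
by the induction hypothesis each edge `f ∋ a'` is used by at most `N(U \ {a'}) ≤ N(U) / 2kD`
systems, so at least half of the systems for `U` extend by `e`. Hence `N(A) > 0`; the degree
bound `2ekD ≥ 4kD` is more than enough.
-/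

open Finset

section DisjointReps

variable {ι V : Type*} [Fintype ι] [DecidableEq ι] [Fintype V] [DecidableEq V]
  (S : ι → Finset (Finset V))

/-- Systems of pairwise disjoint representatives of the families `S a`, `a ∈ U`, normalised to
`∅` off `U` so that each is determined by its values on `U`. -/
def disjointReps (U : Finset ι) : Finset (ι → Finset V) :=
  {φ | (∀ a ∈ U, φ a ∈ S a) ∧ (∀ a ∉ U, φ a = ∅) ∧
    ∀ a ∈ U, ∀ a' ∈ U, a ≠ a' → Disjoint (φ a) (φ a')}

variable {S}

@[simp]
theorem mem_disjointReps {U : Finset ι} {φ : ι → Finset V} :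
    φ ∈ disjointReps S U ↔ (∀ a ∈ U, φ a ∈ S a) ∧ (∀ a ∉ U, φ a = ∅) ∧
      ∀ a ∈ U, ∀ a' ∈ U, a ≠ a' → Disjoint (φ a) (φ a') := by
  simp [disjointReps]

theorem sum_card_compatible_le {U : Finset ι} {a : ι} (ha : a ∉ U) :
    ∑ e ∈ S a, #{φ ∈ disjointReps S U | ∀ a' ∈ U, Disjoint (φ a') e}
      ≤ #(disjointReps S (insert a U)) := by
  rw [← card_sigma]
  refine card_le_card_of_injOn (fun p => Function.update p.2 a p.1) ?_ ?_
  · rintro ⟨e, φ⟩ hp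
    simp only [coe_sigma, Set.mem_sigma_iff, mem_coe, mem_filter, mem_disjointReps] at hp
    simp only [mem_coe, mem_disjointReps, mem_insert, Function.update_apply]
    grind
  · rintro ⟨e, φ⟩ hp ⟨e', φ'⟩ hp' h
    simp only [coe_sigma, Set.mem_sigma_iff, mem_coe, mem_filter, mem_disjointReps] at hp hp'
    obtain rfl : e = e' := by simpa using congrFun h a
    congr 1
    funext x
    by_cases hx : x = a
    · rw [hx, hp.2.1.2.1 a ha, hp'.2.1.2.1 a ha]
    · simpa [hx] using congrFun h x

theorem card_filter_apply_eq_le (U : Finset ι) (a : ι) (f : Finset V) :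
    #{φ ∈ disjointReps S U | φ a = f} ≤ #(disjointReps S (U.erase a)) := by
  refine card_le_card_of_injOn (fun φ => Function.update φ a ∅) ?_ ?_
  · intro φ hφ
    simp only [coe_filter, Set.mem_ofPred_eq, mem_disjointReps] at hφ
    simp only [mem_coe, mem_disjointReps, mem_erase, Function.update_apply]
    grind
  · intro φ hφ ψ hψ h
    simp only [coe_filter, Set.mem_ofPred_eq] at hφ hψ
    funext x
    by_cases hx : x = a
    · rw [hx, hφ.2, hψ.2]
    · simpa [hx] using congrFun h x

theorem card_incompatible_le (U : Finset ι) (e : Finset V) :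
    #{φ ∈ disjointReps S U | ¬∀ a ∈ U, Disjoint (φ a) e}
      ≤ ∑ a ∈ U, ∑ f ∈ S a with ¬Disjoint f e, #{φ ∈ disjointReps S U | φ a = f} := by
  calc _ ≤ #(U.biUnion fun a => {f ∈ S a | ¬Disjoint f e}.biUnion
          fun f => {φ ∈ disjointReps S U | φ a = f}) := by
        refine card_le_card fun φ hφ => ?_
        simp only [mem_filter, mem_disjointReps, not_forall] at hφ
        obtain ⟨⟨hφS, hφ0, hφd⟩, a, ha, hae⟩ := hφ
        simp only [mem_biUnion, mem_filter, mem_disjointReps]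
        exact ⟨a, ha, φ a, ⟨hφS a ha, hae⟩, ⟨hφS, hφ0, hφd⟩, rfl⟩
    _ ≤ _ := card_biUnion_le.trans (sum_le_sum fun _ _ => card_biUnion_le)

theorem card_le_two_mul_card_compatible {U : Finset ι} {e : Finset V} {L : ℕ} (hL : 0 < L)
    (hrep : ∀ a ∈ U, ∀ f, 2 * L * #{φ ∈ disjointReps S U | φ a = f} ≤ #(disjointReps S U))
    (hconf : ∑ a ∈ U, #{f ∈ S a | ¬Disjoint f e} ≤ L) :
    #(disjointReps S U) ≤ 2 * #{φ ∈ disjointReps S U | ∀ a ∈ U, Disjoint (φ a) e} := by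
  have hbad : L * (2 * #{φ ∈ disjointReps S U | ¬∀ a ∈ U, Disjoint (φ a) e})
      ≤ L * #(disjointReps S U) :=
    calc _ ≤ 2 * L * ∑ a ∈ U, ∑ f ∈ S a with ¬Disjoint f e,
            #{φ ∈ disjointReps S U | φ a = f} := by
          rw [← mul_assoc, mul_comm L 2]; gcongr; exact card_incompatible_le U e
      _ = ∑ a ∈ U, ∑ f ∈ S a with ¬Disjoint f e,
            2 * L * #{φ ∈ disjointReps S U | φ a = f} := by simp only [mul_sum]
      _ ≤ ∑ a ∈ U, ∑ f ∈ S a with ¬Disjoint f e, #(disjointReps S U) := by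
          gcongr with a ha f; exact hrep a ha f
      _ = (∑ a ∈ U, #{f ∈ S a | ¬Disjoint f e}) * #(disjointReps S U) := by
          simp only [sum_const, smul_eq_mul, sum_mul]
      _ ≤ L * #(disjointReps S U) := by gcongr
  have hsplit := card_filter_add_card_filter_not (s := disjointReps S U)
    (fun φ => ∀ a ∈ U, Disjoint (φ a) e)
  have := Nat.le_of_mul_le_mul_left hbad hL
  omega

theorem card_mul_card_disjointReps_le {A : Finset ι} {L : ℕ} (hL : 0 < L)
    (hS : ∀ a ∈ A, 4 * L ≤ #(S a))
    (hconf : ∀ a ∈ A, ∀ e ∈ S a, ∑ a' ∈ A.erase a, #{f ∈ S a' | ¬Disjoint f e} ≤ L)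
    {U : Finset ι} (hUA : U ⊆ A) {a : ι} (haA : a ∈ A) (haU : a ∉ U) :
    #(S a) * #(disjointReps S U) ≤ 2 * #(disjointReps S (insert a U)) := by
  induction U using Finset.strongInduction generalizing a with
  | H U ih =>
  have hrep : ∀ a' ∈ U, ∀ f,
      2 * L * #{φ ∈ disjointReps S U | φ a' = f} ≤ #(disjointReps S U) := by
    intro a' ha' f
    have hext := ih (U.erase a') (erase_ssubset ha') ((erase_subset a' U).trans hUA) (hUA ha')
      (notMem_erase a' U)
    rw [insert_erase ha'] at hext
    have := card_filter_apply_eq_le (S := S) U a' f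
    have := hS a' (hUA ha')
    -- `4L * N(U \ {a'}) ≤ #(S a') * N(U \ {a'}) ≤ 2 * N(U)`
    nlinarith
  calc #(S a) * #(disjointReps S U) = ∑ e ∈ S a, #(disjointReps S U) := by
        rw [sum_const, smul_eq_mul]
    _ ≤ ∑ e ∈ S a, 2 * #{φ ∈ disjointReps S U | ∀ a' ∈ U, Disjoint (φ a') e} :=
        sum_le_sum fun e he => card_le_two_mul_card_compatible hL hrep
          ((sum_le_sum_of_subset (subset_erase.2 ⟨hUA, haU⟩)).trans (hconf a haA e he))
    _ = 2 * ∑ e ∈ S a, #{φ ∈ disjointReps S U | ∀ a' ∈ U, Disjoint (φ a') e} :=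
        (mul_sum ..).symm
    _ ≤ 2 * #(disjointReps S (insert a U)) := by
        gcongr; exact sum_card_compatible_le haU

theorem disjointReps_nonempty {A : Finset ι} {L : ℕ} (hL : 0 < L)
    (hS : ∀ a ∈ A, 4 * L ≤ #(S a))
    (hconf : ∀ a ∈ A, ∀ e ∈ S a, ∑ a' ∈ A.erase a, #{f ∈ S a' | ¬Disjoint f e} ≤ L)
    {U : Finset ι} (hUA : U ⊆ A) : (disjointReps S U).Nonempty := by
  induction U using Finset.induction_on with
  | empty => exact ⟨fun _ => ∅, by simp⟩
  | insert a U haU ih =>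
    have haA := hUA (mem_insert_self a U)
    have hUA' := (subset_insert a U).trans hUA
    have hext := card_mul_card_disjointReps_le hL hS hconf hUA' haA haU
    have : 0 < #(S a) * #(disjointReps S U) :=
      Nat.mul_pos (by have := hS a haA; omega) (ih hUA').card_pos
    exact card_pos.1 (by omega)

theorem exists_pairwise_disjoint_reps {A : Finset ι} {L : ℕ} (hL : 0 < L)
    (hS : ∀ a ∈ A, 4 * L ≤ #(S a))
    (hconf : ∀ a ∈ A, ∀ e ∈ S a, ∑ a' ∈ A.erase a, #{f ∈ S a' | ¬Disjoint f e} ≤ L) :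
    ∃ φ : ι → Finset V, (∀ a ∈ A, φ a ∈ S a) ∧
      ∀ a ∈ A, ∀ a' ∈ A, a ≠ a' → Disjoint (φ a) (φ a') := by
  obtain ⟨φ, hφ⟩ := disjointReps_nonempty hL hS hconf Subset.rfl
  obtain ⟨hφS, -, hφd⟩ := mem_disjointReps.1 hφ
  exact ⟨φ, hφS, hφd⟩

end DisjointReps

section BipartiteHypergraph

variable {V : Type*} [DecidableEq V]

theorem sum_card_meeting_le {A B : Finset V} {E : Finset (Finset V)} {k D : ℕ}
    (hsub : ∀ e ∈ E, e ⊆ A ∪ B) (hcard : ∀ e ∈ E, #e ≤ k) (hA : ∀ e ∈ E, #(e ∩ A) ≤ 1)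
    (hdegB : ∀ b ∈ B, #{f ∈ E | b ∈ f} ≤ D) {a : V} (ha : a ∈ A) {e : Finset V} (he : e ∈ E)
    (hae : a ∈ e) :
    ∑ a' ∈ A.erase a, #{f ∈ E | a' ∈ f ∧ ¬Disjoint f e} ≤ k * D := by
  have hunique : ∀ f ∈ E, ∀ x ∈ f, ∀ y ∈ f, x ∈ A → y ∈ A → x = y :=
    fun f hf x hx y hy hxA hyA =>
      card_le_one.1 (hA f hf) x (mem_inter.2 ⟨hx, hxA⟩) y (mem_inter.2 ⟨hy, hyA⟩)
  rw [← card_biUnion]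
  · calc _ ≤ #((e ∩ B).biUnion fun b => {f ∈ E | b ∈ f}) := by
          refine card_le_card fun f hf => ?_
          simp only [mem_biUnion, mem_filter, mem_erase, not_disjoint_iff, mem_inter] at hf ⊢
          obtain ⟨a', ⟨ha'a, ha'A⟩, hfE, ha'f, x, hxf, hxe⟩ := hf
          refine ⟨x, ⟨hxe, ?_⟩, hfE, hxf⟩
          rcases mem_union.1 (hsub e he hxe) with hxA | hxB
          · exact absurd ((hunique f hfE x hxf a' ha'f hxA ha'A).symm.trans
              (hunique e he x hxe a hae hxA ha)) ha'a
          · exact hxB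
      _ ≤ ∑ b ∈ e ∩ B, #{f ∈ E | b ∈ f} := card_biUnion_le
      _ ≤ #(e ∩ B) * D := by
          simpa only [smul_eq_mul] using
            sum_le_card_nsmul _ _ D fun b hb => hdegB b (mem_inter.1 hb).2
      _ ≤ k * D := by
          gcongr; exact (card_le_card inter_subset_left).trans (hcard e he)
  · intro x hx y hy hxy
    simp only [Function.onFun, disjoint_left, mem_filter]
    rintro f ⟨hfE, hxf, -⟩ ⟨-, hyf, -⟩
    exact hxy (hunique f hfE x hxf y hyf (mem_erase.1 hx).2 (mem_erase.1 hy).2)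

end BipartiteHypergraph

theorem bipartite_hypergraph_matching_general (V : Type*) [Fintype V] [DecidableEq V]
    (A B : Finset V) (E : Finset (Finset V))
    (k D : ℕ) (hk : 1 ≤ k) (hD : 1 ≤ D)
    (hedges : ∀ e ∈ E, e ⊆ A ∪ B ∧ e.card = k ∧ (e ∩ A).card = 1)
    (hdegA : ∀ a ∈ A, 2 * Real.exp 1 * k * D ≤ ((E.filter (fun e => a ∈ e)).card : ℝ))
    (hdegB : ∀ b ∈ B, (E.filter (fun e => b ∈ e)).card ≤ D) :
    ∃ M ⊆ E, (∀ e₁ ∈ M, ∀ e₂ ∈ M, e₁ ≠ e₂ → Disjoint e₁ e₂) ∧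
      ∀ a ∈ A, ∃ e ∈ M, a ∈ e := by
  have hdeg : ∀ a ∈ A, 4 * (k * D) ≤ #{e ∈ E | a ∈ e} := by
    intro a ha
    have h2e : (4 : ℝ) ≤ 2 * Real.exp 1 := by linarith [Real.add_one_le_exp 1]
    have hkD : (4 * (k * D) : ℝ) ≤ 2 * Real.exp 1 * k * D := by
      have : (0 : ℝ) ≤ k * D := by positivity
      nlinarith
    exact_mod_cast hkD.trans (hdegA a ha)
  obtain ⟨φ, hφE, hφd⟩ := exists_pairwise_disjoint_reps (S := fun a => {e ∈ E | a ∈ e})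
    (Nat.mul_pos hk hD) hdeg fun a ha e he => by
      simpa only [filter_filter] using sum_card_meeting_le (fun e he => (hedges e he).1)
        (fun e he => (hedges e he).2.1.le) (fun e he => (hedges e he).2.2.le) hdegB ha
        (mem_filter.1 he).1 (mem_filter.1 he).2
  refine ⟨A.image φ, ?_, ?_, fun a ha =>
    ⟨φ a, mem_image_of_mem φ ha, (mem_filter.1 (hφE a ha)).2⟩⟩
  · exact image_subset_iff.2 fun a ha => (mem_filter.1 (hφE a ha)).1
  · simp only [mem_image]
    rintro _ ⟨a, ha, rfl⟩ _ ⟨a', ha', rfl⟩ hne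
    exact hφd a ha a' ha' fun h => hne (h ▸ rfl)

/-- **Bipartite hypergraph matching (Alon).** Let `G = (A,B)` be a `k`-uniform bipartite
hypergraph (every edge meets `A` in exactly one vertex). If for some integer `D` every
vertex of `A` has degree at least `2ekD` and every vertex of `B` has degree at most `D`,
then `G` contains an `A`-perfect matching. -/
theorem bipartite_hypergraph_matching (V : Type*) [Fintype V] [DecidableEq V]
    (A B : Finset V) (hAB : Disjoint A B) (E : Finset (Finset V))
    (k D : ℕ) (hk : 1 ≤ k) (hD : 1 ≤ D)
    (hedges : ∀ e ∈ E, e ⊆ A ∪ B ∧ e.card = k ∧ (e ∩ A).card = 1)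
    (hdegA : ∀ a ∈ A, 2 * Real.exp 1 * k * D ≤ ((E.filter (fun e => a ∈ e)).card : ℝ))
    (hdegB : ∀ b ∈ B, (E.filter (fun e => b ∈ e)).card ≤ D) :
    ∃ M ⊆ E, (∀ e₁ ∈ M, ∀ e₂ ∈ M, e₁ ≠ e₂ → Disjoint e₁ e₂) ∧
      ∀ a ∈ A, ∃ e ∈ M, a ∈ e :=
  bipartite_hypergraph_matching_general V A B E k D hk hD hedges hdegA hdegB
end

section
/- For every real ε ∈ (0,1) and integer d ≥ 2, there exists γ ∈ (0,1) such that the following holds for every fixed graph W and every sufficiently large n. Let G be a graph on n vertices with minimum degree at least (1 − 1/d + ε)·n, let H be a subgraph of G, and let W be a supergraph of H whose degeneracy rooted at V(H) is at most d. Then there are at least (γ·n)^{|V(W)∖V(H)|} embeddings of W into G, i.e. injective maps φ : V(W) → V(G) that fix every vertex of V(H) and map every edge of W to an edge of G. -/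
open Finset
open scoped Classical

noncomputable section

/-- The degeneracy of `W` rooted at `U` is at most `d`: there is an ordering of the
vertices outside `U` in which every vertex has at most `d` neighbours among `U` and the
earlier vertices. -/
def RootedDegAtMost {α : Type*} (W : SimpleGraph α) (U : Set α) (d : ℕ) : Prop :=
  ∃ l : List α, l.Nodup ∧ (∀ x : α, x ∈ l ↔ x ∉ U) ∧
    ∀ (i : ℕ) (hi : i < l.length),
      (W.neighborSet (l.get ⟨i, hi⟩) ∩ (U ∪ {x | x ∈ l.take i})).ncard ≤ d

end

/-! Place the vertices outside the root one at a time, in the degeneracy order. When a vertex `x`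
is placed, at most `|V(W)|` vertices of `G` are taken and `x` has at most `d` placed neighbours,
each of which misses at most `(1/d - ε)n` vertices of `G`. So at least
`n - |V(W)| - d (1/d - ε) n = d ε n - |V(W)| ≥ ε n` images are free once `n ≥ |V(W)|/ε` and
`d ≥ 2`, and distinct choices give distinct embeddings: `γ = ε` works. -/

open Function

namespace SimpleGraph

variable {α β : Type*}

def IsPartialEmbedding (W : SimpleGraph α) (G : SimpleGraph β) (U : Finset α) (ι : α → β) :
    Prop :=
  Set.InjOn ι U ∧ ∀ u ∈ U, ∀ v ∈ U, W.Adj u v → G.Adj (ι u) (ι v)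

variable {W : SimpleGraph α} {G : SimpleGraph β}

theorem IsPartialEmbedding.update_insert {U : Finset α} {ι : α → β} {x : α} {c : β}
    (h : W.IsPartialEmbedding G U ι) (hx : x ∉ U) (hc : c ∉ U.image ι)
    (hadj : ∀ u ∈ U, W.Adj x u → G.Adj (ι u) c) :
    W.IsPartialEmbedding G (insert x U) (update ι x c) := by
  have hne : ∀ u ∈ U, u ≠ x := fun u hu hux => hx (hux ▸ hu)
  refine ⟨?_, ?_⟩
  · rw [coe_insert, Set.injOn_insert (by simpa using hx), update_self]
    refine ⟨fun a ha b hb hab => ?_, ?_⟩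
    · rw [update_of_ne (hne a ha), update_of_ne (hne b hb)] at hab
      exact h.1 ha hb hab
    · rintro ⟨a, ha, hac⟩
      rw [update_of_ne (hne a ha)] at hac
      exact hc (hac ▸ mem_image_of_mem ι ha)
  · intro u hu v hv huv
    rw [mem_insert] at hu hv
    rcases hu with rfl | hu <;> rcases hv with rfl | hv
    · exact absurd huv (W.loopless.irrefl _)
    · rw [update_self, update_of_ne (hne v hv)]
      exact (hadj v hv huv).symm
    · rw [update_self, update_of_ne (hne u hu)]
      exact hadj u hu huv.symm
    · rw [update_of_ne (hne u hu), update_of_ne (hne v hv)]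
      exact h.2 u hu v hv huv

def IsRootedOrder (W : SimpleGraph α) (U : Set α) (d : ℕ) (l : List α) : Prop :=
  l.Nodup ∧ (∀ x, x ∈ l ↔ x ∉ U) ∧
    ∀ (i : ℕ) (hi : i < l.length),
      (W.neighborSet (l.get ⟨i, hi⟩) ∩ (U ∪ {x | x ∈ l.take i})).ncard ≤ d

theorem rootedDegAtMost_iff_exists_isRootedOrder {U : Set α} {d : ℕ} :
    RootedDegAtMost W U d ↔ ∃ l, W.IsRootedOrder U d l :=
  Iff.rfl

namespace IsRootedOrder

variable {U : Set α} {d : ℕ} {x : α} {l : List α}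

theorem notMem_of_cons (h : W.IsRootedOrder U d (x :: l)) : x ∉ U :=
  (h.2.1 x).1 List.mem_cons_self

theorem ncard_neighborSet_inter_le (h : W.IsRootedOrder U d (x :: l)) :
    (W.neighborSet x ∩ U).ncard ≤ d := by
  simpa using h.2.2 0 (by simp)

theorem of_cons (h : W.IsRootedOrder U d (x :: l)) : W.IsRootedOrder (insert x U) d l := by
  obtain ⟨hnd, hcover, hdeg⟩ := h
  obtain ⟨hxl, hnd⟩ := List.nodup_cons.1 hnd
  refine ⟨hnd, fun y => ?_, fun i hi => ?_⟩
  · have hy := hcover y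
    simp only [List.mem_cons, Set.mem_insert_iff, not_or] at hy ⊢
    exact ⟨fun hyl => ⟨fun h => hxl (h ▸ hyl), hy.1 (Or.inr hyl)⟩,
      fun ⟨hyx, hyU⟩ => (hy.2 hyU).resolve_left hyx⟩
  · have hset : insert x U ∪ {y | y ∈ l.take i} = U ∪ {y | y ∈ (x :: l).take (i + 1)} := by
      ext y
      simp only [Set.mem_union, Set.mem_insert_iff, Set.mem_ofPred_eq, List.take_succ_cons,
        List.mem_cons]
      tauto
    rw [hset]
    exact hdeg (i + 1) (by simpa using hi)

theorem mem_of_nil (h : W.IsRootedOrder U d []) (x : α) : x ∈ U := by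
  simpa using h.2.1 x

theorem length_eq [Fintype α] {U : Finset α} (h : W.IsRootedOrder U d l) :
    l.length = Fintype.card α - U.card := by
  have hl : l.toFinset = Uᶜ := by ext x; simpa using h.2.1 x
  rw [← card_compl, ← hl, List.toFinset_card_of_nodup h.1]

end IsRootedOrder

variable [Fintype β]

theorem le_card_filter_notMem_forall_adj {s : ℝ}
    (hG : ∀ b, (Fintype.card β : ℝ) - s ≤ G.degree b) (A B : Finset β) :
    (Fintype.card β : ℝ) - A.card - B.card * s ≤
      (univ.filter fun c => c ∉ A ∧ ∀ b ∈ B, G.Adj b c).card := by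
  set C := univ.filter fun c => c ∉ A ∧ ∀ b ∈ B, G.Adj b c
  have hCc : Cᶜ ⊆ A ∪ B.biUnion fun b => (G.neighborFinset b)ᶜ := by
    intro c hc
    simp only [C, mem_compl, mem_filter, mem_univ, true_and, not_and, not_forall] at hc
    simp only [mem_union, mem_biUnion, mem_compl, mem_neighborFinset]
    by_cases hcA : c ∈ A
    · exact Or.inl hcA
    · obtain ⟨b, hb, hbc⟩ := hc hcA
      exact Or.inr ⟨b, hb, hbc⟩
  have hnon : ∀ b ∈ B, (((G.neighborFinset b)ᶜ).card : ℝ) ≤ s := fun b _ => by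
    rw [card_compl, card_neighborFinset_eq_degree, Nat.cast_sub (G.degree_lt_card_verts b).le]
    linarith [hG b]
  have hCc_card : (Cᶜ.card : ℝ) ≤ A.card + B.card * s := calc
    (Cᶜ.card : ℝ) ≤ (A ∪ B.biUnion fun b => (G.neighborFinset b)ᶜ).card := by
        exact_mod_cast card_le_card hCc
    _ ≤ A.card + (B.biUnion fun b => (G.neighborFinset b)ᶜ).card := by
        exact_mod_cast card_union_le _ _
    _ ≤ A.card + ∑ b ∈ B, (((G.neighborFinset b)ᶜ).card : ℝ) := by
        gcongr; exact_mod_cast card_biUnion_le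
    _ ≤ A.card + B.card * s := by
        gcongr; simpa using sum_le_card_nsmul _ _ _ hnon
  have hsum : (C.card : ℝ) + Cᶜ.card = Fintype.card β := by
    exact_mod_cast card_add_card_compl C
  linarith

variable [Fintype α]

variable (W G) in
noncomputable def rootedEmbeddings (U : Finset α) (ι : α → β) : Finset (α → β) :=
  univ.filter fun φ =>
    Injective φ ∧ (∀ v ∈ U, φ v = ι v) ∧ ∀ u v, W.Adj u v → G.Adj (φ u) (φ v)

theorem sum_card_rootedEmbeddings_update_le {U : Finset α} {ι : α → β} {x : α} (hx : x ∉ U)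
    (C : Finset β) :
    ∑ c ∈ C, (W.rootedEmbeddings G (insert x U) (update ι x c)).card ≤
      (W.rootedEmbeddings G U ι).card := by
  have hdisj : (C : Set β).PairwiseDisjoint
      fun c => W.rootedEmbeddings G (insert x U) (update ι x c) := by
    intro c _ c' _ hcc'
    refine Finset.disjoint_left.2 fun φ hφ hφ' => hcc' ?_
    simp only [rootedEmbeddings, mem_filter, mem_univ, true_and] at hφ hφ'
    simpa using (hφ.2.1 x (mem_insert_self x U)).symm.trans (hφ'.2.1 x (mem_insert_self x U))
  rw [← card_biUnion hdisj]
  refine card_le_card fun φ hφ => ?_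
  simp only [rootedEmbeddings, mem_biUnion, mem_filter, mem_univ, true_and] at hφ ⊢
  obtain ⟨c, -, hinj, hroot, hadj⟩ := hφ
  refine ⟨hinj, fun v hv => ?_, hadj⟩
  rw [hroot v (mem_insert_of_mem hv), update_of_ne (by rintro rfl; exact hx hv)]

theorem IsRootedOrder.pow_length_le_card_rootedEmbeddings {d : ℕ} {s m : ℝ} (hs : 0 ≤ s)
    (hm : 0 ≤ m) (hG : ∀ b, (Fintype.card β : ℝ) - s ≤ G.degree b)
    (hbound : m + Fintype.card α + d * s ≤ Fintype.card β) :
    ∀ {l : List α} {U : Finset α} {ι : α → β}, W.IsRootedOrder U d l →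
      W.IsPartialEmbedding G U ι → m ^ l.length ≤ (W.rootedEmbeddings G U ι).card
  | [], U, ι, hl, hι => by
    have hU := hl.mem_of_nil
    have hmem : ι ∈ W.rootedEmbeddings G U ι :=
      mem_filter.2 ⟨mem_univ _, fun a b h => hι.1 (hU a) (hU b) h, fun _ _ => rfl,
        fun u v h => hι.2 u (hU u) v (hU v) h⟩
    simpa using card_pos.mpr ⟨ι, hmem⟩
  | x :: l, U, ι, hl, hι => by
    have hxU : x ∉ U := hl.notMem_of_cons
    set C := univ.filter fun c =>
      c ∉ U.image ι ∧ ∀ b ∈ (U.filter (W.Adj x)).image ι, G.Adj b c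
    have hC : m ≤ C.card := by
      have hnbr : (U.filter (W.Adj x)).card ≤ d := by
        have := hl.ncard_neighborSet_inter_le
        rwa [show W.neighborSet x ∩ ↑U = ↑(U.filter (W.Adj x)) by ext; simp [and_comm],
          Set.ncard_coe_finset] at this
      have hB : (((U.filter (W.Adj x)).image ι).card : ℝ) * s ≤ d * s := by
        gcongr; exact_mod_cast card_image_le.trans hnbr
      have hA : ((U.image ι).card : ℝ) ≤ Fintype.card α := by
        exact_mod_cast card_image_le.trans (card_le_univ U)
      linarith [le_card_filter_notMem_forall_adj hG (U.image ι) ((U.filter (W.Adj x)).image ι)]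
    have hext : ∀ c ∈ C, m ^ l.length ≤
        (W.rootedEmbeddings G (insert x U) (update ι x c)).card := by
      intro c hc
      simp only [C, mem_filter, mem_univ, true_and] at hc
      refine pow_length_le_card_rootedEmbeddings hs hm hG hbound ?_ ?_
      · simpa only [coe_insert] using hl.of_cons
      · exact hι.update_insert hxU hc.1 fun u hu hxu =>
          hc.2 _ (mem_image_of_mem ι (mem_filter.2 ⟨hu, hxu⟩))
    calc m ^ (x :: l).length = m * m ^ l.length := by rw [List.length_cons, pow_succ']
      _ ≤ C.card * m ^ l.length := by gcongr
      _ ≤ ∑ c ∈ C, ((W.rootedEmbeddings G (insert x U) (update ι x c)).card : ℝ) := by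
        simpa using card_nsmul_le_sum C _ _ hext
      _ ≤ (W.rootedEmbeddings G U ι).card := by
        exact_mod_cast sum_card_rootedEmbeddings_update_le hxU C

theorem pow_le_card_rootedEmbeddings [Nonempty β] {U : Finset α} {ι : α → β} {d : ℕ}
    {s m : ℝ} (hW : RootedDegAtMost W ↑U d) (hι : W.IsPartialEmbedding G U ι) (hm : 0 ≤ m)
    (hG : ∀ b, (Fintype.card β : ℝ) - s ≤ G.degree b)
    (hbound : m + Fintype.card α + d * s ≤ Fintype.card β) :
    m ^ (Fintype.card α - U.card) ≤ (W.rootedEmbeddings G U ι).card := by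
  obtain ⟨l, hl⟩ := rootedDegAtMost_iff_exists_isRootedOrder.1 hW
  have hs : 0 ≤ s := by
    obtain ⟨b⟩ := ‹Nonempty β›
    have : (G.degree b : ℝ) < Fintype.card β := by exact_mod_cast G.degree_lt_card_verts b
    linarith [hG b]
  rw [← hl.length_eq]
  exact hl.pow_length_le_card_rootedEmbeddings hs hm hG hbound hι

end SimpleGraph

open SimpleGraph

theorem degOf_eq_degree {n : ℕ} (G : SimpleGraph (Fin n)) (v : Fin n) :
    degOf G v = G.degree v := by
  rw [degOf, ← Nat.card_coe_set_eq, Nat.card_eq_fintype_card, card_neighborSet_eq_degree]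

/-- **Embedding rooted graphs of bounded degeneracy.** For every `ε ∈ (0,1)` and integer
`d ≥ 2` there is `γ ∈ (0,1)` such that for every fixed graph `W` with root set `R` whose
degeneracy rooted at `R` is at most `d`, and every sufficiently large `n`: if `G` is an
`n`-vertex graph with `δ(G) ≥ (1 − 1/d + ε)·n` and `ι` places the root `R` into `G` (so
that the rooted subgraph `H`, the restriction of `W` to `R`, becomes a subgraph of `G`),
then there are at least `(γ·n)^{|V(W)∖R|}` embeddings of `W` into `G` fixing the root. -/
theorem degeneracy_embedding (ε : ℝ) (hε : ε ∈ Set.Ioo (0:ℝ) 1) (d : ℕ) (hd : 2 ≤ d) :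
    ∃ γ ∈ Set.Ioo (0:ℝ) 1,
      ∀ (N : ℕ) (W : SimpleGraph (Fin N)) (R : Finset (Fin N)),
        RootedDegAtMost W (↑R) d →
        ∃ n₀ : ℕ, ∀ n : ℕ, n₀ ≤ n →
          ∀ G : SimpleGraph (Fin n),
            (∀ v, (1 - 1 / (d:ℝ) + ε) * n ≤ (degOf G v : ℝ)) →
            ∀ ι : Fin N → Fin n, Set.InjOn ι (↑R) →
              (∀ u ∈ R, ∀ v ∈ R, W.Adj u v → G.Adj (ι u) (ι v)) →
              (γ * n) ^ (N - R.card) ≤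
                (({φ : Fin N → Fin n | Function.Injective φ ∧ (∀ v ∈ R, φ v = ι v) ∧
                    ∀ u v, W.Adj u v → G.Adj (φ u) (φ v)}).ncard : ℝ) := by
  obtain ⟨hε0, hε1⟩ := hε
  refine ⟨ε, ⟨hε0, hε1⟩, fun N W R hW =>
    ⟨⌈N / ε⌉₊ + 1, fun n hn G hG ι hinj hadj => ?_⟩⟩
  have : Nonempty (Fin n) := ⟨⟨0, by omega⟩⟩
  have hNn : (N : ℝ) ≤ n * ε :=
    (div_le_iff₀ hε0).1 <| (Nat.le_ceil _).trans <| by exact_mod_cast (Nat.le_succ _).trans hn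
  have hd0 : (d : ℝ) ≠ 0 := by positivity
  have hd2 : (2 : ℝ) ≤ d := by exact_mod_cast hd
  have hset : {φ : Fin N → Fin n | Function.Injective φ ∧ (∀ v ∈ R, φ v = ι v) ∧
      ∀ u v, W.Adj u v → G.Adj (φ u) (φ v)} = ↑(W.rootedEmbeddings G R ι) := by
    simp [rootedEmbeddings]
  have hdeg : ∀ v, (Fintype.card (Fin n) : ℝ) - (1 / d - ε) * n ≤ G.degree v := fun v => by
    rw [Fintype.card_fin, ← degOf_eq_degree]
    convert hG v using 1
    ring
  have hbound :
      ε * n + Fintype.card (Fin N) + d * ((1 / d - ε) * n) ≤ Fintype.card (Fin n) := by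
    have : (d : ℝ) * ((1 / d - ε) * n) = n - d * ε * n := by field_simp
    simp only [Fintype.card_fin, this]
    nlinarith
  have key := pow_le_card_rootedEmbeddings hW ⟨hinj, hadj⟩ (by positivity) hdeg hbound
  rw [hset, Set.ncard_coe_finset]
  rwa [Fintype.card_fin] at key
end
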